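/- arXiv:2005.13574 — 2 statements merged into one kernel-verified Lean document; each statement's English description precedes it below -/
import Mathlib

section
/- The degenerated NLS map T_{a,b,c} (as above) has Lax representation M_{12}(u₁,u₂,a) M_{13}(v₁,v₂,b) M_{23}(w₁,w₂,c) = M_{23}(z₁,z₂,c) M_{13}(y₁,y₂,b) M_{12}(x₁,x₂,a) with M(x₁,x₂,a) = [[x₁, x₂],[a/x₂, 0]] and the standard 3×3 embeddings M_{ij}. -/
set_option linter.unusedVariables false

noncomputable def u1f (a b c x1 x2 y1 y2 z1 z2 : ℂ) : ℂ := y1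
noncomputable def u2f (a b c x1 x2 y1 y2 z1 z2 : ℂ) : ℂ :=
  a*x1*x2*y2/(a*y2*z1 + b*x1*x2*z2)
noncomputable def v1f (a b c x1 x2 y1 y2 z1 z2 : ℂ) : ℂ := x1
noncomputable def v2f (a b c x1 x2 y1 y2 z1 z2 : ℂ) : ℂ := b*x2*z2/(a*c)
noncomputable def w1f (a b c x1 x2 y1 y2 z1 z2 : ℂ) : ℂ := y1*z1/x1
noncomputable def w2f (a b c x1 x2 y1 y2 z1 z2 : ℂ) : ℂ :=
  (a*y2*z1 + b*x1*x2*z2)/(a*x1*x2)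

noncomputable def M12 (x1 x2 a : ℂ) : Matrix (Fin 3) (Fin 3) ℂ :=
  !![x1, x2, 0; a/x2, 0, 0; 0, 0, 1]
noncomputable def M13 (x1 x2 a : ℂ) : Matrix (Fin 3) (Fin 3) ℂ :=
  !![x1, 0, x2; 0, 1, 0; a/x2, 0, 0]
noncomputable def M23 (x1 x2 a : ℂ) : Matrix (Fin 3) (Fin 3) ℂ :=
  !![1, 0, 0; 0, x1, x2; 0, a/x2, 0]

/-!
Both triple products multiply out, for arbitrary entries, to matrices of the shape
`[[*, *, *], [*, *, 0], [*, 0, 0]]`, so the Lax equation amounts to six scalar identities.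
Only `u₂ w₂ = y₂` and the `(0,1)` entry need more than clearing denominators: they hold because
`D = a y₂ z₁ + b x₁ x₂ z₂` is both the denominator of `u₂` and the numerator of `w₂`.
-/

theorem M12_mul_M13_mul_M23 (u1 u2 v1 v2 w1 w2 a b c : ℂ) :
    M12 u1 u2 a * M13 v1 v2 b * M23 w1 w2 c =
      !![u1 * v1, u2 * w1 + u1 * v2 * c / w2, u2 * w2;
         a * v1 / u2, a * v2 * c / (u2 * w2), 0;
         b / v2, 0, 0] := by
  simp only [M12, M13, M23, Matrix.mul_fin_three]
  ext i j
  fin_cases i <;> fin_cases j <;> simp <;> ring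

theorem M23_mul_M13_mul_M12 (z1 z2 y1 y2 x1 x2 a b c : ℂ) :
    M23 z1 z2 c * M13 y1 y2 b * M12 x1 x2 a =
      !![y1 * x1, y1 * x2, y2;
         b * z2 * x1 / y2 + a * z1 / x2, b * z2 * x2 / y2, 0;
         a * c / (z2 * x2), 0, 0] := by
  simp only [M12, M13, M23, Matrix.mul_fin_three]
  ext i j
  fin_cases i <;> fin_cases j <;> simp <;> ring

section

variable {a b c x1 x2 y1 y2 z1 z2 : ℂ}

theorem u2f_mul_w2f (ha : a ≠ 0) (hx1 : x1 ≠ 0) (hx2 : x2 ≠ 0)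
    (hden : a*y2*z1 + b*x1*x2*z2 ≠ 0) :
    u2f a b c x1 x2 y1 y2 z1 z2 * w2f a b c x1 x2 y1 y2 z1 z2 = y2 := by
  unfold u2f w2f
  generalize a*y2*z1 + b*x1*x2*z2 = D at *
  field_simp

theorem u2f_mul_w1f_add_u1f_mul_v2f_mul_div_w2f (ha : a ≠ 0) (hc : c ≠ 0) (hx1 : x1 ≠ 0)
    (hx2 : x2 ≠ 0) (hden : a*y2*z1 + b*x1*x2*z2 ≠ 0) :
    u2f a b c x1 x2 y1 y2 z1 z2 * w1f a b c x1 x2 y1 y2 z1 z2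
      + u1f a b c x1 x2 y1 y2 z1 z2 * v2f a b c x1 x2 y1 y2 z1 z2 * c
        / w2f a b c x1 x2 y1 y2 z1 z2 = y1 * x2 := by
  unfold u1f u2f v2f w1f w2f
  generalize hD : a*y2*z1 + b*x1*x2*z2 = D at *
  field_simp
  linear_combination y1 * hD

end

theorem nls_degenerate_lax_general (a b c x1 x2 y1 y2 z1 z2 : ℂ)
    (ha : a ≠ 0) (hb : b ≠ 0) (hc : c ≠ 0)
    (hx1 : x1 ≠ 0) (hx2 : x2 ≠ 0) (hy2 : y2 ≠ 0)
    (hden : a*y2*z1 + b*x1*x2*z2 ≠ 0) :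
    M12 (u1f a b c x1 x2 y1 y2 z1 z2) (u2f a b c x1 x2 y1 y2 z1 z2) a
      * M13 (v1f a b c x1 x2 y1 y2 z1 z2) (v2f a b c x1 x2 y1 y2 z1 z2) b
      * M23 (w1f a b c x1 x2 y1 y2 z1 z2) (w2f a b c x1 x2 y1 y2 z1 z2) c
      = M23 z1 z2 c * M13 y1 y2 b * M12 x1 x2 a := by
  rw [M12_mul_M13_mul_M23, M23_mul_M13_mul_M12,
    u2f_mul_w1f_add_u1f_mul_v2f_mul_div_w2f ha hc hx1 hx2 hden, u2f_mul_w2f ha hx1 hx2 hden]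
  ext i j
  fin_cases i <;> fin_cases j <;> simp [u1f, u2f, v1f, v2f] <;> field_simp
  ring

theorem nls_degenerate_lax (a b c x1 x2 y1 y2 z1 z2 : ℂ)
    (ha : a ≠ 0) (hb : b ≠ 0) (hc : c ≠ 0)
    (hx1 : x1 ≠ 0) (hx2 : x2 ≠ 0) (hy1 : y1 ≠ 0) (hy2 : y2 ≠ 0)
    (hz1 : z1 ≠ 0) (hz2 : z2 ≠ 0)
    (hden : a*y2*z1 + b*x1*x2*z2 ≠ 0) :
    M12 (u1f a b c x1 x2 y1 y2 z1 z2) (u2f a b c x1 x2 y1 y2 z1 z2) a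
      * M13 (v1f a b c x1 x2 y1 y2 z1 z2) (v2f a b c x1 x2 y1 y2 z1 z2) b
      * M23 (w1f a b c x1 x2 y1 y2 z1 z2) (w2f a b c x1 x2 y1 y2 z1 z2) c
      = M23 z1 z2 c * M13 y1 y2 b * M12 x1 x2 a :=
  nls_degenerate_lax_general a b c x1 x2 y1 y2 z1 z2 ha hb hc hx1 hx2 hy2 hden
end

section
/- The three-dimensional map T_{a,b,c}(x,y,z) = ((ay+bz)/(axy), bz/(ac), y) is noninvolutive and does NOT satisfy the parametric functional tetrahedron equation: there exist parameter values a,b,c,d,e,f and points in (ℂ*)⁶ where T^{123}_{a,b,c} ∘ T^{145}_{a,d,e} ∘ T^{246}_{b,d,f} ∘ T^{356}_{c,e,f} and T^{356}_{c,e,f} ∘ T^{246}_{b,d,f} ∘ T^{145}_{a,d,e} ∘ T^{123}_{a,b,c} disagree. -/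
/-!
Both failures come from a single coordinate and need only `b ≠ a c`. The middle output of
`T_{a,b,c} ∘ T_{a,b,c}` at `(x, y, z)` is `b y / (a c)`, not `y`. In the tetrahedron equation the
fourth coordinate is `d x₆ / (a c f)` on the left and `d x₆ / (b f)` on the right. Positive
parameters map positive points to positive points, so at a positive point every denominator along
both compositions is nonzero.
-/

set_option linter.unusedVariables false

noncomputable def TP (a b c x y z : ℂ) : ℂ × ℂ × ℂ :=
  ((a*y + b*z)/(a*x*y), b*z/(a*c), y)

/-- Variables nonzero (all denominators are then nonzero). -/
def okP (a b c x y z : ℂ) : Prop := x ≠ 0 ∧ y ≠ 0 ∧ z ≠ 0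

abbrev V6 := ℂ × ℂ × ℂ × ℂ × ℂ × ℂ

noncomputable def T123 (a b c : ℂ) (v : V6) : V6 :=
  let t := TP a b c v.1 v.2.1 v.2.2.1
  (t.1, t.2.1, t.2.2, v.2.2.2.1, v.2.2.2.2.1, v.2.2.2.2.2)
noncomputable def T145 (a b c : ℂ) (v : V6) : V6 :=
  let t := TP a b c v.1 v.2.2.2.1 v.2.2.2.2.1
  (t.1, v.2.1, v.2.2.1, t.2.1, t.2.2, v.2.2.2.2.2)
noncomputable def T246 (a b c : ℂ) (v : V6) : V6 :=
  let t := TP a b c v.2.1 v.2.2.2.1 v.2.2.2.2.2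
  (v.1, t.1, v.2.2.1, t.2.1, v.2.2.2.2.1, t.2.2)
noncomputable def T356 (a b c : ℂ) (v : V6) : V6 :=
  let t := TP a b c v.2.2.1 v.2.2.2.2.1 v.2.2.2.2.2
  (v.1, v.2.1, t.1, v.2.2.2.1, t.2.1, t.2.2)

def ok123 (a b c : ℂ) (v : V6) : Prop := okP a b c v.1 v.2.1 v.2.2.1
def ok145 (a b c : ℂ) (v : V6) : Prop := okP a b c v.1 v.2.2.2.1 v.2.2.2.2.1
def ok246 (a b c : ℂ) (v : V6) : Prop := okP a b c v.2.1 v.2.2.2.1 v.2.2.2.2.2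
def ok356 (a b c : ℂ) (v : V6) : Prop := okP a b c v.2.2.1 v.2.2.2.2.1 v.2.2.2.2.2

open scoped ComplexOrder

theorem TP_pos {a b c x y z : ℂ} (ha : 0 < a) (hb : 0 < b) (hc : 0 < c)
    (hx : 0 < x) (hy : 0 < y) (hz : 0 < z) :
    0 < (TP a b c x y z).1 ∧ 0 < (TP a b c x y z).2.1 ∧ 0 < (TP a b c x y z).2.2 :=
  ⟨div_pos (add_pos (mul_pos ha hy) (mul_pos hb hz)) (mul_pos (mul_pos ha hx) hy),
    div_pos (mul_pos hb hz) (mul_pos ha hc), hy⟩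

theorem okP_of_pos (a b c : ℂ) {x y z : ℂ} (hx : 0 < x) (hy : 0 < y) (hz : 0 < z) :
    okP a b c x y z :=
  ⟨hx.ne', hy.ne', hz.ne'⟩

theorem TP_TP_ne_self {a b c x y z : ℂ} (ha : a ≠ 0) (hc : c ≠ 0) (hy : y ≠ 0)
    (hb : b ≠ a * c) :
    TP a b c (TP a b c x y z).1 (TP a b c x y z).2.1 (TP a b c x y z).2.2 ≠ (x, y, z) := by
  intro h
  have hmid : b * y / (a * c) = y := congrArg (fun p => p.2.1) h
  rw [div_eq_iff (mul_ne_zero ha hc), mul_comm b] at hmid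
  exact hb (mul_left_cancel₀ hy hmid)

def AllPos (v : V6) : Prop :=
  0 < v.1 ∧ 0 < v.2.1 ∧ 0 < v.2.2.1 ∧ 0 < v.2.2.2.1 ∧ 0 < v.2.2.2.2.1 ∧ 0 < v.2.2.2.2.2

section Positivity

variable {a b c : ℂ} {v : V6}

theorem AllPos.T123 (ha : 0 < a) (hb : 0 < b) (hc : 0 < c) (hv : AllPos v) :
    AllPos (T123 a b c v) := by
  obtain ⟨h1, h2, h3, h4, h5, h6⟩ := hv
  obtain ⟨t1, t2, t3⟩ := TP_pos ha hb hc h1 h2 h3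
  exact ⟨t1, t2, t3, h4, h5, h6⟩

theorem AllPos.T145 (ha : 0 < a) (hb : 0 < b) (hc : 0 < c) (hv : AllPos v) :
    AllPos (T145 a b c v) := by
  obtain ⟨h1, h2, h3, h4, h5, h6⟩ := hv
  obtain ⟨t1, t4, t5⟩ := TP_pos ha hb hc h1 h4 h5
  exact ⟨t1, h2, h3, t4, t5, h6⟩

theorem AllPos.T246 (ha : 0 < a) (hb : 0 < b) (hc : 0 < c) (hv : AllPos v) :
    AllPos (T246 a b c v) := by
  obtain ⟨h1, h2, h3, h4, h5, h6⟩ := hv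
  obtain ⟨t2, t4, t6⟩ := TP_pos ha hb hc h2 h4 h6
  exact ⟨h1, t2, h3, t4, h5, t6⟩

theorem AllPos.T356 (ha : 0 < a) (hb : 0 < b) (hc : 0 < c) (hv : AllPos v) :
    AllPos (T356 a b c v) := by
  obtain ⟨h1, h2, h3, h4, h5, h6⟩ := hv
  obtain ⟨t3, t5, t6⟩ := TP_pos ha hb hc h3 h5 h6
  exact ⟨h1, h2, t3, h4, t5, t6⟩

variable (a b c)

theorem AllPos.ok123 (hv : AllPos v) : ok123 a b c v :=
  okP_of_pos a b c hv.1 hv.2.1 hv.2.2.1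

theorem AllPos.ok145 (hv : AllPos v) : ok145 a b c v :=
  okP_of_pos a b c hv.1 hv.2.2.2.1 hv.2.2.2.2.1

theorem AllPos.ok246 (hv : AllPos v) : ok246 a b c v :=
  okP_of_pos a b c hv.2.1 hv.2.2.2.1 hv.2.2.2.2.2

theorem AllPos.ok356 (hv : AllPos v) : ok356 a b c v :=
  okP_of_pos a b c hv.2.2.1 hv.2.2.2.2.1 hv.2.2.2.2.2

end Positivity

section FourthCoordinate

variable (a b c d e f : ℂ) (v : V6)

theorem T123_T145_T246_T356_fourth (he : e ≠ 0) :
    (T123 a b c (T145 a d e (T246 b d f (T356 c e f v)))).2.2.2.1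
      = d * v.2.2.2.2.2 / (a * c * f) := by
  simp only [T123, T145, T246, T356, TP]
  field_simp

theorem T356_T246_T145_T123_fourth :
    (T356 c e f (T246 b d f (T145 a d e (T123 a b c v)))).2.2.2.1 = d * v.2.2.2.2.2 / (b * f) :=
  rfl

end FourthCoordinate

theorem tetrahedron_ne {a b c d e f : ℂ} {v : V6} (ha : a ≠ 0) (hc : c ≠ 0) (hd : d ≠ 0)
    (he : e ≠ 0) (hf : f ≠ 0) (hv : v.2.2.2.2.2 ≠ 0) (hb : b ≠ a * c) :
    T123 a b c (T145 a d e (T246 b d f (T356 c e f v)))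
      ≠ T356 c e f (T246 b d f (T145 a d e (T123 a b c v))) := by
  intro h
  have h4 := congrArg (fun w : V6 => w.2.2.2.1) h
  simp only [T123_T145_T246_T356_fourth a b c d e f v he, T356_T246_T145_T123_fourth,
    div_eq_mul_inv] at h4
  have hinv := inv_inj.mp (mul_left_cancel₀ (mul_ne_zero hd hv) h4)
  exact hb (mul_right_cancel₀ hf hinv).symm

theorem tetrahedron_fails_of_pos {a b c d e f : ℂ} {v : V6} (ha : 0 < a) (hb : 0 < b)
    (hc : 0 < c) (hd : 0 < d) (he : 0 < e) (hf : 0 < f) (hv : AllPos v) (hbac : b ≠ a * c) :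
    ok356 c e f v ∧ ok246 b d f (T356 c e f v) ∧
      ok145 a d e (T246 b d f (T356 c e f v)) ∧
      ok123 a b c (T145 a d e (T246 b d f (T356 c e f v))) ∧
      ok123 a b c v ∧ ok145 a d e (T123 a b c v) ∧
      ok246 b d f (T145 a d e (T123 a b c v)) ∧
      ok356 c e f (T246 b d f (T145 a d e (T123 a b c v))) ∧
      T123 a b c (T145 a d e (T246 b d f (T356 c e f v)))
        ≠ T356 c e f (T246 b d f (T145 a d e (T123 a b c v))) := by
  have l1 := hv.T356 hc he hf
  have l2 := l1.T246 hb hd hf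
  have l3 := l2.T145 ha hd he
  have r1 := hv.T123 ha hb hc
  have r2 := r1.T145 ha hd he
  have r3 := r2.T246 hb hd hf
  exact ⟨hv.ok356 c e f, l1.ok246 b d f, l2.ok145 a d e, l3.ok123 a b c, hv.ok123 a b c,
    r1.ok145 a d e, r2.ok246 b d f, r3.ok356 c e f,
    tetrahedron_ne ha.ne' hc.ne' hd.ne' he.ne' hf.ne' hv.2.2.2.2.2.ne' hbac⟩

theorem restricted_map_noninvolutive_and_not_tetrahedron :
    (∃ a b c x y z : ℂ, a ≠ 0 ∧ b ≠ 0 ∧ c ≠ 0 ∧ okP a b c x y z ∧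
      okP a b c (TP a b c x y z).1 (TP a b c x y z).2.1 (TP a b c x y z).2.2 ∧
      TP a b c (TP a b c x y z).1 (TP a b c x y z).2.1 (TP a b c x y z).2.2
        ≠ (x, y, z)) ∧
    (∃ a b c d e f : ℂ, ∃ v : V6, a ≠ 0 ∧ b ≠ 0 ∧ c ≠ 0 ∧ d ≠ 0 ∧ e ≠ 0 ∧ f ≠ 0 ∧
      ok356 c e f v ∧ ok246 b d f (T356 c e f v) ∧
      ok145 a d e (T246 b d f (T356 c e f v)) ∧
      ok123 a b c (T145 a d e (T246 b d f (T356 c e f v))) ∧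
      ok123 a b c v ∧ ok145 a d e (T123 a b c v) ∧
      ok246 b d f (T145 a d e (T123 a b c v)) ∧
      ok356 c e f (T246 b d f (T145 a d e (T123 a b c v))) ∧
      T123 a b c (T145 a d e (T246 b d f (T356 c e f v)))
        ≠ T356 c e f (T246 b d f (T145 a d e (T123 a b c v)))) := by
  have h1 : (0 : ℂ) < 1 := zero_lt_one
  have h2 : (0 : ℂ) < 2 := zero_lt_two
  have hbac : (2 : ℂ) ≠ 1 * 1 := by norm_num
  refine ⟨⟨1, 2, 1, 1, 1, 1, one_ne_zero, two_ne_zero, one_ne_zero, okP_of_pos 1 2 1 h1 h1 h1,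
      ?_, TP_TP_ne_self one_ne_zero one_ne_zero one_ne_zero hbac⟩,
    ⟨1, 2, 1, 1, 1, 1, (1, 1, 1, 1, 1, 1), one_ne_zero, two_ne_zero, one_ne_zero, one_ne_zero,
      one_ne_zero, one_ne_zero,
      tetrahedron_fails_of_pos h1 h2 h1 h1 h1 h1 ⟨h1, h1, h1, h1, h1, h1⟩ hbac⟩⟩
  obtain ⟨t1, t2, t3⟩ := TP_pos h1 h2 h1 h1 h1 h1
  exact okP_of_pos 1 2 1 t1 t2 t3
end
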